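/- There are infinitely many nondegenerate codimension-3 degree sequences D = (0, x, y, z) (integers 0 < x < y < z with gcd(x, y, z) = 1) such that B_1(D) = 2; in particular, the set of such degree sequences, each of the form (0, x, y, y + 1), is infinite. -/

import Mathlib

/-!
If `B_1(D) = 2` then `L(D)·π_1(D) = 2` with `π_1(D) > 1`, so `L(D) = 1`: `π_1 = 2` and `π_2, π_3`
are integers. A prime `p ∣ z - y` then divides `xy` (as `π_3 ∈ ℤ`). Since `π_1 = 2` rewrites as
`y² = 2x(y + z - x) - y(z - y)`, in either case `p ∣ y`, hence `p ∣ z`, and `p ∤ x` by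
nondegeneracy. So `p²` divides `yz = 2(y - x)(z - x)` and is coprime to `(y - x)(z - x)`, which is
absurd; hence `z = y + 1`.

Conversely, for `z = y + 1` and `x = y - m` the three conditions reduce to
`y(y + 1) = 2m(m + 1)`, the Pell equation `(2y + 1)² - 2(2m + 1)² = -1`, whose solutions
`(3, 2)`, `(20, 14)`, … are produced by `(y, m) ↦ (3y + 4m + 3, 2y + 3m + 2)`.
-/

/-- `π_1` of the codimension-3 degree sequence `(0, x, y, z)`. -/
noncomputable def piOne (x y z : ℤ) : ℚ := ((y * z : ℤ) : ℚ) / (((y - x) * (z - x) : ℤ) : ℚ)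

/-- `π_2` of the codimension-3 degree sequence `(0, x, y, z)`. -/
noncomputable def piTwo (x y z : ℤ) : ℚ := ((x * z : ℤ) : ℚ) / (((y - x) * (z - y) : ℤ) : ℚ)

/-- `π_3` of the codimension-3 degree sequence `(0, x, y, z)`. -/
noncomputable def piThree (x y z : ℤ) : ℚ := ((x * y : ℤ) : ℚ) / (((z - x) * (z - y) : ℤ) : ℚ)

/-- `B_1(D) = 2` for the codimension-3 degree sequence `D = (0, x, y, z)`:
the least positive integer `L` making all `L·π_i(D)` integers satisfies
`L·π_1(D) = 2`. -/
def BOneEqTwo (x y z : ℤ) : Prop :=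
  ∃ L : ℕ, IsLeast {L' : ℕ | 0 < L' ∧
      (∃ n : ℤ, (L' : ℚ) * piOne x y z = n) ∧
      (∃ n : ℤ, (L' : ℚ) * piTwo x y z = n) ∧
      (∃ n : ℤ, (L' : ℚ) * piThree x y z = n)} L ∧
    (L : ℚ) * piOne x y z = 2

lemma exists_intCast_eq_div_iff {a b : ℤ} (hb : b ≠ 0) :
    (∃ n : ℤ, (a : ℚ) / b = n) ↔ b ∣ a := by
  have hb' : (b : ℚ) ≠ 0 := by exact_mod_cast hb
  constructor
  · rintro ⟨n, hn⟩
    refine ⟨n, ?_⟩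
    rw [div_eq_iff hb'] at hn
    exact_mod_cast hn.trans (mul_comm _ _)
  · rintro ⟨n, rfl⟩
    exact ⟨n, by push_cast; field_simp⟩

section DegreeSequence

variable {x y z : ℤ}

theorem bOneEqTwo_iff (hx : 0 < x) (hxy : x < y) (hyz : y < z) :
    BOneEqTwo x y z ↔ y * z = 2 * ((y - x) * (z - x)) ∧
      (y - x) * (z - y) ∣ x * z ∧ (z - x) * (z - y) ∣ x * y := by
  have hd1 : 0 < (y - x) * (z - x) := mul_pos (by omega) (by omega)
  have hd2 : (y - x) * (z - y) ≠ 0 := (mul_pos (by omega) (by omega)).ne'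
  have hd3 : (z - x) * (z - y) ≠ 0 := (mul_pos (by omega) (by omega)).ne'
  constructor
  · rintro ⟨L, ⟨⟨hL, -, h2, h3⟩, -⟩, hπ⟩
    have hLyz : L * (y * z) = 2 * ((y - x) * (z - x)) := by
      rw [piOne, mul_div_assoc', div_eq_iff (by exact_mod_cast hd1.ne')] at hπ
      exact_mod_cast hπ
    have hlt : (y - x) * (z - x) < y * z := by nlinarith
    have hL1 : L = 1 := by
      have : (L : ℤ) < 2 := by nlinarith
      omega
    subst hL1
    simp only [Nat.cast_one, one_mul, piTwo, piThree, exists_intCast_eq_div_iff hd2,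
      exists_intCast_eq_div_iff hd3] at hLyz h2 h3
    exact ⟨hLyz, h2, h3⟩
  · rintro ⟨h1, h2, h3⟩
    have hπ : piOne x y z = 2 := by
      rw [piOne, div_eq_iff (by exact_mod_cast hd1.ne')]
      exact_mod_cast h1
    refine ⟨1, ⟨⟨one_pos, ⟨2, by simp [hπ]⟩, ?_, ?_⟩, fun _ hL => hL.1⟩, by simp [hπ]⟩
    · simpa only [Nat.cast_one, one_mul, piTwo] using (exists_intCast_eq_div_iff hd2).2 h2
    · simpa only [Nat.cast_one, one_mul, piThree] using (exists_intCast_eq_div_iff hd3).2 h3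

theorem eq_add_one_of_mul_eq_two_mul (hyz : y < z)
    (hgcd : Int.gcd x (Int.gcd y z) = 1) (h1 : y * z = 2 * ((y - x) * (z - x)))
    (h3 : (z - x) * (z - y) ∣ x * y) : z = y + 1 := by
  by_contra hne
  obtain ⟨p, hp, hpb⟩ := Nat.exists_prime_and_dvd (n := (z - y).natAbs) (by omega)
  replace hpb : (p : ℤ) ∣ z - y := Int.natCast_dvd.2 hpb
  have hp' : Prime (p : ℤ) := Nat.prime_iff_prime_int.1 hp
  have hnot_all : ¬ ((p : ℤ) ∣ x ∧ (p : ℤ) ∣ y ∧ (p : ℤ) ∣ z) := fun ⟨hx, hy, hz⟩ =>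
    hp'.not_isUnit <| isUnit_of_dvd_one <| by
      simpa [hgcd] using Int.dvd_coe_gcd hx (Int.dvd_coe_gcd hy hz)
  have hy : (p : ℤ) ∣ y := by
    rcases hp'.dvd_mul.1 ((hpb.mul_left (z - x)).trans h3) with hx | hy
    · refine hp'.dvd_of_dvd_pow (n := 2) ?_
      have hsq : y ^ 2 = 2 * x * (y + z - x) - y * (z - y) := by linear_combination -h1
      rw [hsq]
      exact dvd_sub ((hx.mul_left 2).mul_right _) (hpb.mul_left y)
    · exact hy
  have hz : (p : ℤ) ∣ z := by simpa using dvd_add hy hpb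
  have hx : ¬ (p : ℤ) ∣ x := fun hx => hnot_all ⟨hx, hy, hz⟩
  have hcop : IsCoprime ((p : ℤ) ^ 2) ((y - x) * (z - x)) := by
    refine IsCoprime.pow_left (IsCoprime.mul_right ?_ ?_) <;>
      refine (Prime.coprime_iff_not_dvd hp').2 fun h => hx ?_
    · simpa using dvd_sub hy h
    · simpa using dvd_sub hz h
  have hp2 : (p : ℤ) ^ 2 ∣ 2 :=
    hcop.dvd_of_dvd_mul_right (h1 ▸ pow_two (p : ℤ) ▸ mul_dvd_mul hy hz)
  have : p ^ 2 ≤ 2 := Nat.le_of_dvd two_pos (by exact_mod_cast hp2)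
  nlinarith [hp.two_le]

theorem bOneEqTwo_of_mul_add_one_eq (m : ℤ) (hm : 0 < m) (hmy : m < y)
    (hpell : y * (y + 1) = 2 * (m * (m + 1))) : BOneEqTwo (y - m) y (y + 1) := by
  refine (bOneEqTwo_iff (by omega) (by omega) (by omega)).2 ⟨?_, ?_, ?_⟩
  · linear_combination hpell
  · exact ⟨2 * (m + 1) - (y + 1), by linear_combination hpell⟩
  · exact ⟨2 * m - y, by linear_combination hpell⟩

end DegreeSequence

def pellPair : ℕ → ℤ × ℤ
  | 0 => (3, 2)
  | n + 1 =>
    (3 * (pellPair n).1 + 4 * (pellPair n).2 + 3, 2 * (pellPair n).1 + 3 * (pellPair n).2 + 2)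

lemma pellPair_bounds (n : ℕ) : 0 < (pellPair n).2 ∧ (pellPair n).2 < (pellPair n).1 := by
  induction n with
  | zero => simp [pellPair]
  | succ n ih => simp only [pellPair]; omega

lemma pellPair_eq (n : ℕ) :
    (pellPair n).1 * ((pellPair n).1 + 1) = 2 * ((pellPair n).2 * ((pellPair n).2 + 1)) := by
  induction n with
  | zero => simp [pellPair]
  | succ n ih => simp only [pellPair]; linear_combination ih

lemma strictMono_pellPair_fst : StrictMono fun n => (pellPair n).1 :=
  strictMono_nat_of_lt_succ fun n => by
    have := pellPair_bounds n
    simp only [pellPair]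
    omega

/-- There are infinitely many nondegenerate codimension-3 degree sequences
`D = (0, x, y, z)` with `B_1(D) = 2`; moreover each such `D` has `z = y + 1`. -/
theorem infinitely_many_B_one_eq_two :
    {p : ℤ × ℤ × ℤ | 0 < p.1 ∧ p.1 < p.2.1 ∧ p.2.1 < p.2.2 ∧
      Int.gcd p.1 (Int.gcd p.2.1 p.2.2) = 1 ∧
      BOneEqTwo p.1 p.2.1 p.2.2}.Infinite ∧
    ∀ p : ℤ × ℤ × ℤ, 0 < p.1 → p.1 < p.2.1 → p.2.1 < p.2.2 →
      Int.gcd p.1 (Int.gcd p.2.1 p.2.2) = 1 →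
      BOneEqTwo p.1 p.2.1 p.2.2 → p.2.2 = p.2.1 + 1 := by
  constructor
  · refine Set.infinite_of_injective_forall_mem
      (f := fun n => ((pellPair n).1 - (pellPair n).2, (pellPair n).1, (pellPair n).1 + 1))
      (fun a b hab => strictMono_pellPair_fst.injective (Prod.ext_iff.1 (Prod.ext_iff.1 hab).2).1)
      fun n => ?_
    obtain ⟨hm, hmy⟩ := pellPair_bounds n
    refine ⟨by simpa using hmy, by simpa using hm, by simp, ?_,
      bOneEqTwo_of_mul_add_one_eq _ hm hmy (pellPair_eq n)⟩
    simp [Int.gcd_self_add_right]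
  · rintro ⟨x, y, z⟩ hx hxy hyz hgcd hB
    obtain ⟨h1, -, h3⟩ := (bOneEqTwo_iff hx hxy hyz).1 hB
    exact eq_add_one_of_mul_eq_two_mul hyz hgcd h1 h3
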